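/- arXiv:2510.25096 — 2 statements merged into one kernel-verified Lean document; each statement's English description precedes it below -/
import Mathlib

section
/- Let Ω be a finite probability space and G : Ω → 𝒢, S : Ω → 𝒮, Y : Ω → 𝒴, Z : Ω → 𝒵 random variables into finite types satisfying the Markov chain condition (S,Y) ↔ G ↔ Z, i.e. Z is conditionally independent of the paired variable (S,Y) given G. Then for every β ∈ ℝ, the multi-view conditional information bottleneck objective simplifies as I(S;Z) + I(G;Z|(S,Y)) − β·I(Y;Z|S) = I(G;Z) − γ·I(Y;Z|S), where γ = β + 1. -/
open scoped Classical

/-- Probability of an event `E` on a finite probability space with weights `p`. -/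
noncomputable def Pr {Ω : Type*} [Fintype Ω] (p : Ω → ℝ) (E : Ω → Prop) : ℝ :=
  ∑ ω, if E ω then p ω else 0

/-- Mutual information `I(X;Y)` of random variables on a finite probability space.
Summands with zero joint probability are automatically `0` since the factor vanishes. -/
noncomputable def MI {Ω 𝒳 𝒴 : Type*} [Fintype Ω] [Fintype 𝒳] [Fintype 𝒴]
    (p : Ω → ℝ) (X : Ω → 𝒳) (Y : Ω → 𝒴) : ℝ :=
  ∑ x : 𝒳, ∑ y : 𝒴,
    Pr p (fun ω => X ω = x ∧ Y ω = y) *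
      Real.log (Pr p (fun ω => X ω = x ∧ Y ω = y) /
        (Pr p (fun ω => X ω = x) * Pr p (fun ω => Y ω = y)))

/-- Conditional mutual information `I(X;Y|Z)` on a finite probability space. -/
noncomputable def CMI {Ω 𝒳 𝒴 𝒵 : Type*} [Fintype Ω] [Fintype 𝒳] [Fintype 𝒴] [Fintype 𝒵]
    (p : Ω → ℝ) (X : Ω → 𝒳) (Y : Ω → 𝒴) (Z : Ω → 𝒵) : ℝ :=
  ∑ x : 𝒳, ∑ y : 𝒴, ∑ z : 𝒵,
    Pr p (fun ω => X ω = x ∧ Y ω = y ∧ Z ω = z) *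
      Real.log ((Pr p (fun ω => Z ω = z) *
          Pr p (fun ω => X ω = x ∧ Y ω = y ∧ Z ω = z)) /
        (Pr p (fun ω => X ω = x ∧ Z ω = z) * Pr p (fun ω => Y ω = y ∧ Z ω = z)))

/-- `X` and `Y` are conditionally independent given `Z`. -/
def CondIndep {Ω 𝒳 𝒴 𝒵 : Type*} [Fintype Ω]
    (p : Ω → ℝ) (X : Ω → 𝒳) (Y : Ω → 𝒴) (Z : Ω → 𝒵) : Prop :=
  ∀ x y z,
    Pr p (fun ω => Z ω = z) * Pr p (fun ω => X ω = x ∧ Y ω = y ∧ Z ω = z) =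
      Pr p (fun ω => X ω = x ∧ Z ω = z) * Pr p (fun ω => Y ω = y ∧ Z ω = z)

section helpers
variable {Ω : Type*} [Fintype Ω] (p : Ω → ℝ)

lemma Pr_congr' {E F : Ω → Prop} (h : ∀ ω, E ω ↔ F ω) : Pr p E = Pr p F :=
  Finset.sum_congr rfl fun ω _ => by simp [h ω]

lemma single_le_Pr' (hp : ∀ ω, 0 ≤ p ω) (E : Ω → Prop) (ω : Ω) (hE : E ω) :
    p ω ≤ Pr p E := by
  have := Finset.single_le_sum (f := fun ω' => if E ω' then p ω' else 0)
    (fun ω' _ => by by_cases h : E ω' <;> simp [h, hp ω']) (Finset.mem_univ ω)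
  simpa [hE, Pr] using this

lemma sum_Pr_mul' {ι : Type*} [Fintype ι] (v : Ω → ι) (f : ι → ℝ) :
    ∑ i, Pr p (fun ω => v ω = i) * f i = ∑ ω, p ω * f (v ω) := by
  simp only [Pr, Finset.sum_mul, ite_mul, zero_mul]
  rw [Finset.sum_comm]
  exact Finset.sum_congr rfl fun ω _ => by simp

lemma MI_omega' {𝒳 𝒴 : Type*} [Fintype 𝒳] [Fintype 𝒴] (X : Ω → 𝒳) (Y : Ω → 𝒴) :
    MI p X Y = ∑ ω, p ω *
      Real.log (Pr p (fun ω' => X ω' = X ω ∧ Y ω' = Y ω) /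
        (Pr p (fun ω' => X ω' = X ω) * Pr p (fun ω' => Y ω' = Y ω))) := by
  have h := sum_Pr_mul' p (fun ω => (X ω, Y ω))
    (fun i => Real.log (Pr p (fun ω' => X ω' = i.1 ∧ Y ω' = i.2) /
        (Pr p (fun ω' => X ω' = i.1) * Pr p (fun ω' => Y ω' = i.2))))
  rw [← h, Fintype.sum_prod_type]
  unfold MI
  refine Finset.sum_congr rfl fun x _ => Finset.sum_congr rfl fun y _ => ?_
  rw [Pr_congr' p (E := fun ω => (X ω, Y ω) = (x, y)) (F := fun ω => X ω = x ∧ Y ω = y)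
    (fun ω => by simp [Prod.ext_iff])]

lemma CMI_omega' {𝒳 𝒴 𝒵 : Type*} [Fintype 𝒳] [Fintype 𝒴] [Fintype 𝒵]
    (X : Ω → 𝒳) (Y : Ω → 𝒴) (Z : Ω → 𝒵) :
    CMI p X Y Z = ∑ ω, p ω *
      Real.log ((Pr p (fun ω' => Z ω' = Z ω) *
          Pr p (fun ω' => X ω' = X ω ∧ Y ω' = Y ω ∧ Z ω' = Z ω)) /
        (Pr p (fun ω' => X ω' = X ω ∧ Z ω' = Z ω) *
          Pr p (fun ω' => Y ω' = Y ω ∧ Z ω' = Z ω))) := by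
  have h := sum_Pr_mul' p (fun ω => (X ω, Y ω, Z ω))
    (fun i => Real.log ((Pr p (fun ω' => Z ω' = i.2.2) *
          Pr p (fun ω' => X ω' = i.1 ∧ Y ω' = i.2.1 ∧ Z ω' = i.2.2)) /
        (Pr p (fun ω' => X ω' = i.1 ∧ Z ω' = i.2.2) *
          Pr p (fun ω' => Y ω' = i.2.1 ∧ Z ω' = i.2.2))))
  rw [← h, Fintype.sum_prod_type]
  unfold CMI
  refine Finset.sum_congr rfl fun x _ => ?_
  rw [Fintype.sum_prod_type]
  refine Finset.sum_congr rfl fun y _ => Finset.sum_congr rfl fun z _ => ?_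
  rw [Pr_congr' p (E := fun ω => (X ω, Y ω, Z ω) = (x, y, z))
    (F := fun ω => X ω = x ∧ Y ω = y ∧ Z ω = z)
    (fun ω => by simp [Prod.ext_iff])]

end helpers

lemma log_identity' {k b c j e f i m n : ℝ}
    (hk : 0 < k) (hb : 0 < b) (hc : 0 < c) (hj : 0 < j) (he : 0 < e)
    (hf : 0 < f) (hi : 0 < i) (hm : 0 < m) (hn : 0 < n)
    (hM : n * e = m * f) :
    Real.log (k / (b * c)) + Real.log (j * e / (f * i)) + Real.log (b * i / (j * k)) =
      Real.log (m / (n * c)) := by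
  have h1 : Real.log n + Real.log e = Real.log m + Real.log f := by
    have := congrArg Real.log hM
    rw [Real.log_mul hn.ne' he.ne', Real.log_mul hm.ne' hf.ne'] at this
    linarith
  rw [Real.log_div hk.ne' (by positivity), Real.log_div (by positivity) (by positivity),
      Real.log_div (by positivity) (by positivity), Real.log_div hm.ne' (by positivity),
      Real.log_mul hb.ne' hc.ne', Real.log_mul hj.ne' he.ne', Real.log_mul hf.ne' hi.ne',
      Real.log_mul hb.ne' hi.ne', Real.log_mul hj.ne' hk.ne', Real.log_mul hn.ne' hc.ne']
  linarith

lemma chain_key' {Ω 𝒢 𝒮 𝒴 𝒵 : Type*} [Fintype Ω] [Fintype 𝒢] [Fintype 𝒮] [Fintype 𝒴] [Fintype 𝒵]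
    (p : Ω → ℝ) (hp : ∀ ω, 0 ≤ p ω)
    (G : Ω → 𝒢) (S : Ω → 𝒮) (Y : Ω → 𝒴) (Z : Ω → 𝒵)
    (hMarkov : CondIndep p Z (fun ω => (S ω, Y ω)) G) :
    MI p S Z + CMI p G Z (fun ω => (S ω, Y ω)) + CMI p Y Z S = MI p G Z := by
  rw [MI_omega' p S Z, CMI_omega' p G Z (fun ω => (S ω, Y ω)), CMI_omega' p Y Z S,
      MI_omega' p G Z, ← Finset.sum_add_distrib, ← Finset.sum_add_distrib]
  refine Finset.sum_congr rfl fun ω _ => ?_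
  rcases (hp ω).eq_or_lt with h0 | h0
  · simp [← h0]
  rw [← mul_add, ← mul_add]
  congr 1
  have pos : ∀ E : Ω → Prop, E ω → 0 < Pr p E :=
    fun E hE => h0.trans_le (single_le_Pr' p hp E ω hE)
  -- canonicalize events
  rw [Pr_congr' p (E := fun ω' => S ω' = S ω ∧ Z ω' = Z ω)
      (F := fun ω' => Z ω' = Z ω ∧ S ω' = S ω) (fun ω' => and_comm),
    Pr_congr' p (E := fun ω' => (S ω', Y ω') = (S ω, Y ω))
      (F := fun ω' => Y ω' = Y ω ∧ S ω' = S ω) (fun ω' => by simp [Prod.ext_iff]; tauto),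
    Pr_congr' p (E := fun ω' => Z ω' = Z ω ∧ (S ω', Y ω') = (S ω, Y ω))
      (F := fun ω' => Y ω' = Y ω ∧ Z ω' = Z ω ∧ S ω' = S ω)
      (fun ω' => by simp [Prod.ext_iff]; tauto)]
  have hM := hMarkov (Z ω) (S ω, Y ω) (G ω)
  rw [Pr_congr' p (E := fun ω' => Z ω' = Z ω ∧ (S ω', Y ω') = (S ω, Y ω) ∧ G ω' = G ω)
        (F := fun ω' => G ω' = G ω ∧ Z ω' = Z ω ∧ (S ω', Y ω') = (S ω, Y ω))
        (fun ω' => by tauto),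
      Pr_congr' p (E := fun ω' => Z ω' = Z ω ∧ G ω' = G ω)
        (F := fun ω' => G ω' = G ω ∧ Z ω' = Z ω) (fun ω' => and_comm),
      Pr_congr' p (E := fun ω' => (S ω', Y ω') = (S ω, Y ω) ∧ G ω' = G ω)
        (F := fun ω' => G ω' = G ω ∧ (S ω', Y ω') = (S ω, Y ω)) (fun ω' => and_comm)] at hM
  exact log_identity'
    (pos _ ⟨rfl, rfl⟩) (pos _ rfl) (pos _ rfl) (pos _ ⟨rfl, rfl⟩)
    (pos _ ⟨rfl, rfl, rfl⟩) (pos _ ⟨rfl, rfl⟩) (pos _ ⟨rfl, rfl, rfl⟩)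
    (pos _ ⟨rfl, rfl⟩) (pos _ rfl) hM

/-- Under the Markov chain condition `(S,Y) ↔ G ↔ Z`, the multi-view conditional
information bottleneck objective simplifies:
`I(S;Z) + I(G;Z|(S,Y)) − β·I(Y;Z|S) = I(G;Z) − γ·I(Y;Z|S)` with `γ = β + 1`. -/
theorem mcib_objective_simplification
    {Ω 𝒢 𝒮 𝒴 𝒵 : Type*} [Fintype Ω] [Fintype 𝒢] [Fintype 𝒮] [Fintype 𝒴] [Fintype 𝒵]
    (p : Ω → ℝ) (hp : ∀ ω, 0 ≤ p ω) (hp1 : ∑ ω, p ω = 1)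
    (G : Ω → 𝒢) (S : Ω → 𝒮) (Y : Ω → 𝒴) (Z : Ω → 𝒵)
    (hMarkov : CondIndep p Z (fun ω => (S ω, Y ω)) G) :
    ∀ β γ : ℝ, γ = β + 1 →
      MI p S Z + CMI p G Z (fun ω => (S ω, Y ω)) - β * CMI p Y Z S =
        MI p G Z - γ * CMI p Y Z S := by
  intro β γ hγ
  have hkey := chain_key' p hp G S Y Z hMarkov
  subst hγ
  linarith
end

section
/- Let Ω be a finite probability space and Y : Ω → 𝒴, Z : Ω → 𝒵, S : Ω → 𝒮 random variables into finite types. Let q : 𝒵 → 𝒮 → 𝒴 → ℝ be such that for every z and s, q z s is a probability mass function on 𝒴 with q z s y > 0 for all y (the variational decoder p_φ(Y|Z,S)). Then I(Y;Z|S) ≥ ∑_ω p ω · log( q (Z ω) (S ω) (Y ω) ), i.e. the expected log-likelihood of the decoder is a lower bound on the conditional mutual information I(Y;Z|S). -/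
open scoped Classical

lemma Pr_nonneg {Ω : Type*} [Fintype Ω] {p : Ω → ℝ} (hp : ∀ ω, 0 ≤ p ω) (E : Ω → Prop) :
    0 ≤ Pr p E :=
  Finset.sum_nonneg fun ω _ => by by_cases h : E ω <;> simp [Pr, h, hp ω]

lemma Pr_mono {Ω : Type*} [Fintype Ω] {p : Ω → ℝ} (hp : ∀ ω, 0 ≤ p ω) {E F : Ω → Prop}
    (h : ∀ ω, E ω → F ω) : Pr p E ≤ Pr p F := by
  apply Finset.sum_le_sum
  intro ω _
  by_cases hE : E ω
  · simp [hE, h ω hE]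
  · by_cases hF : F ω <;> simp [hE, hF, hp ω]

lemma Pr_fiber {Ω 𝒴 : Type*} [Fintype Ω] [Fintype 𝒴] (p : Ω → ℝ)
    (Y : Ω → 𝒴) (E : Ω → Prop) :
    ∑ y : 𝒴, Pr p (fun ω => Y ω = y ∧ E ω) = Pr p E := by
  unfold Pr
  rw [Finset.sum_comm]
  refine Finset.sum_congr rfl fun ω _ => ?_
  by_cases h : E ω <;> simp [h]

lemma Pr_fiber2 {Ω 𝒵 : Type*} [Fintype Ω] [Fintype 𝒵] (p : Ω → ℝ)
    (Z : Ω → 𝒵) (A E : Ω → Prop) :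
    ∑ z : 𝒵, Pr p (fun ω => A ω ∧ Z ω = z ∧ E ω) = Pr p (fun ω => A ω ∧ E ω) := by
  unfold Pr
  rw [Finset.sum_comm]
  refine Finset.sum_congr rfl fun ω _ => ?_
  by_cases h : A ω ∧ E ω
  · simp [h.1, h.2]
  · rw [if_neg h]
    refine Finset.sum_eq_zero fun z _ => ?_
    rw [if_neg]
    tauto

lemma key_ineq (a b c d : ℝ) (ha : 0 ≤ a) (hab : a ≤ b) (hac : a ≤ c) (had : a ≤ d)
    (hb : 0 ≤ b) (hc : 0 ≤ c) (hd : 0 ≤ d) :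
    a - b * d / c ≤ a * Real.log (c * a / (b * d)) := by
  rcases eq_or_lt_of_le ha with h0 | h0
  · rw [← h0]
    simp
    positivity
  · have hb' : 0 < b := lt_of_lt_of_le h0 hab
    have hc' : 0 < c := lt_of_lt_of_le h0 hac
    have hd' : 0 < d := lt_of_lt_of_le h0 had
    have := Real.log_le_sub_one_of_pos (x := (c * a / (b * d))⁻¹) (by positivity)
    rw [Real.log_inv] at this
    have hlog : 1 - (c * a / (b * d))⁻¹ ≤ Real.log (c * a / (b * d)) := by linarith
    have h2 := mul_le_mul_of_nonneg_left hlog (le_of_lt h0)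
    calc a - b * d / c = a * (1 - (c * a / (b * d))⁻¹) := by field_simp
      _ ≤ a * Real.log (c * a / (b * d)) := h2

/-- The expected log-likelihood of any everywhere-positive variational decoder
`q(Y|Z,S)` is a lower bound on the conditional mutual information `I(Y;Z|S)`. -/
theorem decoder_loglik_lower_bound
    {Ω 𝒴 𝒵 𝒮 : Type*} [Fintype Ω] [Fintype 𝒴] [Fintype 𝒵] [Fintype 𝒮]
    (p : Ω → ℝ) (hp : ∀ ω, 0 ≤ p ω) (hp1 : ∑ ω, p ω = 1)
    (Y : Ω → 𝒴) (Z : Ω → 𝒵) (S : Ω → 𝒮)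
    (q : 𝒵 → 𝒮 → 𝒴 → ℝ) (hq0 : ∀ z s y, 0 < q z s y) (hq1 : ∀ z s, ∑ y, q z s y = 1) :
    CMI p Y Z S ≥ ∑ ω, p ω * Real.log (q (Z ω) (S ω) (Y ω)) := by
  have hRHS : ∑ ω, p ω * Real.log (q (Z ω) (S ω) (Y ω)) ≤ 0 := by
    refine Finset.sum_nonpos fun ω _ => ?_
    refine mul_nonpos_of_nonneg_of_nonpos (hp ω) ?_
    refine Real.log_nonpos (le_of_lt (hq0 _ _ _)) ?_
    calc q (Z ω) (S ω) (Y ω) ≤ ∑ y, q (Z ω) (S ω) y :=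
          Finset.single_le_sum (fun y _ => (hq0 _ _ y).le) (Finset.mem_univ _)
      _ = 1 := hq1 _ _
  have hCMI : 0 ≤ CMI p Y Z S := by
    have hz : ∀ z : 𝒮, ∑ x : 𝒴, ∑ y : 𝒵,
        (Pr p (fun ω => Y ω = x ∧ Z ω = y ∧ S ω = z)
          - Pr p (fun ω => Y ω = x ∧ S ω = z) * Pr p (fun ω => Z ω = y ∧ S ω = z)
              / Pr p (fun ω => S ω = z)) = 0 := by
      intro z
      have h1 : ∑ x : 𝒴, ∑ y : 𝒵, Pr p (fun ω => Y ω = x ∧ Z ω = y ∧ S ω = z)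
          = Pr p (fun ω => S ω = z) := by
        rw [Finset.sum_congr rfl fun x _ => Pr_fiber2 p Z (fun ω => Y ω = x) (fun ω => S ω = z)]
        exact Pr_fiber p Y _
      have h2 : ∑ x : 𝒴, ∑ y : 𝒵,
          Pr p (fun ω => Y ω = x ∧ S ω = z) * Pr p (fun ω => Z ω = y ∧ S ω = z)
              / Pr p (fun ω => S ω = z)
          = Pr p (fun ω => S ω = z) * Pr p (fun ω => S ω = z) / Pr p (fun ω => S ω = z) := by
        have : ∀ x : 𝒴, ∑ y : 𝒵,
            Pr p (fun ω => Y ω = x ∧ S ω = z) * Pr p (fun ω => Z ω = y ∧ S ω = z)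
              / Pr p (fun ω => S ω = z)
            = Pr p (fun ω => Y ω = x ∧ S ω = z) * Pr p (fun ω => S ω = z)
              / Pr p (fun ω => S ω = z) := by
          intro x
          rw [← Finset.sum_div, ← Finset.mul_sum, Pr_fiber p Z (fun ω => S ω = z)]
        rw [Finset.sum_congr rfl fun x _ => this x, ← Finset.sum_div, ← Finset.sum_mul,
          Pr_fiber p Y (fun ω => S ω = z)]
      rw [Finset.sum_congr rfl fun x _ => Finset.sum_sub_distrib _ _, Finset.sum_sub_distrib,
        h1, h2]
      rcases eq_or_ne (Pr p (fun ω => S ω = z)) 0 with h | h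
      · simp [h]
      · field_simp; ring
    have hsum0 : ∑ x : 𝒴, ∑ y : 𝒵, ∑ z : 𝒮,
        (Pr p (fun ω => Y ω = x ∧ Z ω = y ∧ S ω = z)
          - Pr p (fun ω => Y ω = x ∧ S ω = z) * Pr p (fun ω => Z ω = y ∧ S ω = z)
              / Pr p (fun ω => S ω = z)) = 0 := by
      rw [Finset.sum_congr rfl fun x _ => Finset.sum_comm, Finset.sum_comm]
      exact Finset.sum_eq_zero fun z _ => hz z
    unfold CMI
    rw [← hsum0]
    refine Finset.sum_le_sum fun x _ => Finset.sum_le_sum fun y _ =>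
      Finset.sum_le_sum fun z _ => ?_
    exact key_ineq _ _ _ _ (Pr_nonneg hp _)
      (Pr_mono hp fun ω h => ⟨h.1, h.2.2⟩)
      (Pr_mono hp fun ω h => h.2.2)
      (Pr_mono hp fun ω h => ⟨h.2.1, h.2.2⟩)
      (Pr_nonneg hp _) (Pr_nonneg hp _) (Pr_nonneg hp _)
  linarith
end
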